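/- With notation as in the previous statement (a > 1, b = a^{−p/q}, Q = ab > 0, k = q k₁, ℓ = k(1+p/q) ∈ ℕ), the constant term of the Laurent expansion at s = −ℓ of the function Z(s) = D^{s/2} binom(−s,k)(−1)^k a^{−s−k}b^k/(1 − a^{−s−k}b^k) equals D^{−ℓ/2} binom(ℓ,k) (−1)^k [ (log D − log a)/(2 log a) + (H_{ℓ−k} − H_ℓ)/log a ], where H_n = Σ_{j=1}^n 1/j and H_0 = 0. -/

import Mathlib

/-!
Since `b ^ k = a ^ (-k p / q)` and `ℓ = k + k p / q`, the factor `a ^ (-s-k) b ^ k` is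
`e ^ (-w)` with `w = log a · (s + ℓ)`, so `Z s = P s / (e ^ w - 1)` where
`P s = D ^ (s/2) binom(-s, k) (-1) ^ k` is differentiable at `-ℓ`. As
`1 / (e ^ w - 1) = 1 / w - 1 / 2 + O(w)`, the constant term of `Z` at its simple pole is
`-P(-ℓ) / 2 + P'(-ℓ) / log a`, and the logarithmic derivative of `binom(-s, k)` at `s = -ℓ` is
`-∑_{j<k} 1 / (ℓ - j) = H_{ℓ-k} - H_ℓ`.
-/

/-- The generalized binomial coefficient `binom(-s, k)`. -/
noncomputable def genBinomNeg (s : ℂ) (k : ℕ) : ℂ :=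
  (∏ j ∈ Finset.range k, (-s - j)) / (k.factorial : ℂ)

open Filter Finset Complex Topology

theorem Complex.tendsto_exp_sub_one_sub_div_sq :
    Tendsto (fun z : ℂ => (exp z - 1 - z) / z ^ 2) (𝓝[≠] 0) (𝓝 2⁻¹) := by
  have hbound : ∀ z : ℂ, z ≠ 0 → ‖z‖ ≤ 1 → ‖(exp z - 1 - z) / z ^ 2 - 2⁻¹‖ ≤ ‖z‖ := by
    intro z hz hz1
    have h := exp_bound hz1 (n := 3) (by norm_num)
    norm_num [Nat.factorial] at h
    calc ‖(exp z - 1 - z) / z ^ 2 - 2⁻¹‖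
        = ‖exp z - ∑ m ∈ range 3, z ^ m / m.factorial‖ / ‖z‖ ^ 2 := by
          rw [← norm_pow, ← norm_div]; congr 1
          simp only [sum_range_succ, range_zero, sum_empty, Nat.factorial]
          field_simp
          ring
      _ ≤ ‖z‖ ^ 3 * (2 / 9) / ‖z‖ ^ 2 := by gcongr
      _ ≤ ‖z‖ := by
          rw [div_le_iff₀ (by positivity)]
          nlinarith [pow_pos (norm_pos_iff.2 hz) 3]
  rw [tendsto_iff_norm_sub_tendsto_zero]
  refine squeeze_zero' (Eventually.of_forall fun _ => norm_nonneg _) ?_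
    (tendsto_norm_zero.mono_left nhdsWithin_le_nhds)
  filter_upwards [self_mem_nhdsWithin,
    nhdsWithin_le_nhds (Metric.closedBall_mem_nhds (0 : ℂ) one_pos)] with z hz hz1
  exact hbound z hz (mem_closedBall_zero_iff.1 hz1)

theorem Complex.tendsto_inv_exp_sub_one_sub_inv :
    Tendsto (fun z : ℂ => (exp z - 1)⁻¹ - z⁻¹) (𝓝[≠] 0) (𝓝 (-2⁻¹)) := by
  set w : ℂ → ℂ := fun z => (exp z - 1 - z) / z ^ 2
  have hw := tendsto_exp_sub_one_sub_div_sq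
  have hden : Tendsto (fun z => 1 + z * w z) (𝓝[≠] 0) (𝓝 1) := by
    simpa using tendsto_const_nhds.add ((tendsto_id.mono_left nhdsWithin_le_nhds).mul hw)
  have hlim : Tendsto (fun z => -w z / (1 + z * w z)) (𝓝[≠] 0) (𝓝 (-2⁻¹)) := by
    have h := hw.neg.div hden one_ne_zero
    rw [div_one] at h
    exact h
  refine hlim.congr' ?_
  filter_upwards [self_mem_nhdsWithin, hden.eventually_ne one_ne_zero] with z (hz : z ≠ 0) hz1
  have hexp : exp z - 1 = z * (1 + z * w z) := by
    simp only [w]; field_simp; ring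
  have hz1' : 1 + w z * z ≠ 0 := by rwa [mul_comm]
  rw [hexp]
  field_simp
  ring

theorem Complex.exp_neg_div_one_sub_exp_neg (w : ℂ) :
    exp (-w) / (1 - exp (-w)) = (exp w - 1)⁻¹ := by
  rw [exp_neg]
  by_cases h : exp w = 1
  · simp [h]
  · field_simp [exp_ne_zero w, sub_ne_zero.2 h]

theorem tendsto_mul_sub_nhdsNE_zero {𝕜 : Type*} [NormedField 𝕜] {c L : 𝕜} (hL : L ≠ 0) :
    Tendsto (fun s => L * (s - c)) (𝓝[≠] c) (𝓝[≠] 0) := by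
  refine tendsto_nhdsWithin_iff.2 ⟨?_, ?_⟩
  · have h : Tendsto (fun s => L * (s - c)) (𝓝 c) (𝓝 (L * (c - c))) :=
      (continuous_const.mul (continuous_sub_right c)).tendsto c
    simpa using h.mono_left nhdsWithin_le_nhds
  · filter_upwards [self_mem_nhdsWithin] with s (hs : s ≠ c)
    exact mul_ne_zero hL (sub_ne_zero.2 hs)

theorem HasDerivAt.tendsto_mul_inv_exp_sub_one_sub_div {P : ℂ → ℂ} {P' c L : ℂ}
    (hP : HasDerivAt P P' c) (hL : L ≠ 0) :
    Tendsto (fun s => P s * (Complex.exp (L * (s - c)) - 1)⁻¹ - P c / (L * (s - c))) (𝓝[≠] c)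
      (𝓝 (P c * -2⁻¹ + P' / L)) := by
  have hpole : Tendsto (fun s => P s * ((Complex.exp (L * (s - c)) - 1)⁻¹ - (L * (s - c))⁻¹))
      (𝓝[≠] c) (𝓝 (P c * -2⁻¹)) :=
    (hP.continuousAt.tendsto.mono_left nhdsWithin_le_nhds).mul
      (tendsto_inv_exp_sub_one_sub_inv.comp (tendsto_mul_sub_nhdsNE_zero hL))
  have hslope : Tendsto (fun s => slope P c s / L) (𝓝[≠] c) (𝓝 (P' / L)) :=
    (hasDerivAt_iff_tendsto_slope.1 hP).div_const L
  refine (hpole.add hslope).congr' ?_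
  filter_upwards [self_mem_nhdsWithin] with s (hs : s ≠ c)
  rw [slope_def_field]
  field_simp [sub_ne_zero.2 hs]
  ring

theorem HasDerivAt.fun_finsetProd_of_ne_zero {𝕜 ι : Type*} [NontriviallyNormedField 𝕜]
    [DecidableEq ι] {u : Finset ι} {f : ι → 𝕜 → 𝕜} {f' : ι → 𝕜} {x : 𝕜}
    (hf : ∀ i ∈ u, HasDerivAt (f i) (f' i) x) (h0 : ∀ i ∈ u, f i x ≠ 0) :
    HasDerivAt (∏ i ∈ u, f i ·) ((∏ i ∈ u, f i x) * ∑ i ∈ u, f' i / f i x) x := by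
  refine (HasDerivAt.fun_finsetProd hf).congr_deriv ?_
  rw [mul_sum]
  refine sum_congr rfl fun i hi => ?_
  rw [← mul_prod_erase u (f · x) hi, smul_eq_mul]
  field_simp [h0 i hi]

theorem sum_range_inv_natCast_sub {K : Type*} [DivisionRing K] [CharZero K] {n k : ℕ}
    (hk : k ≤ n) : ∑ j ∈ range k, ((n : K) - j)⁻¹ = harmonic n - harmonic (n - k) := by
  induction k with
  | zero => simp
  | succ k ih =>
    have hsucc : n - k = n - (k + 1) + 1 := by omega
    rw [sum_range_succ, ih (by omega), hsucc, harmonic_succ, ← hsucc]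
    push_cast [Nat.cast_sub (show k ≤ n by omega)]
    abel

theorem genBinomNeg_neg_natCast (n k : ℕ) : genBinomNeg (-n) k = n.choose k := by
  rw [genBinomNeg]
  simp_rw [neg_neg]
  rw [← descPochhammer_eval_eq_prod_range, descPochhammer_eval_eq_descFactorial,
    Nat.descFactorial_eq_factorial_mul_choose]
  push_cast
  exact mul_div_cancel_left₀ _ (Nat.cast_ne_zero.2 k.factorial_ne_zero)

theorem hasDerivAt_genBinomNeg_neg_natCast {n k : ℕ} (hk : k ≤ n) :
    HasDerivAt (genBinomNeg · k) (-(n.choose k * (harmonic n - harmonic (n - k) : ℚ))) (-n) := by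
  have hfactor : ∀ j ∈ range k, HasDerivAt (fun s : ℂ => -s - j) (-1) (-n) :=
    fun j _ => (hasDerivAt_neg _).sub_const _
  have hne : ∀ j ∈ range k, -(-(n : ℂ)) - j ≠ 0 := by
    intro j hj
    rw [neg_neg, sub_ne_zero, Ne, Nat.cast_inj]
    have := mem_range.1 hj
    omega
  refine ((HasDerivAt.fun_finsetProd_of_ne_zero hfactor hne).div_const
    (k.factorial : ℂ)).congr_deriv ?_
  rw [mul_div_right_comm, ← genBinomNeg, genBinomNeg_neg_natCast]
  simp_rw [neg_neg, neg_div, sum_neg_distrib, one_div, sum_range_inv_natCast_sub hk]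
  push_cast
  ring

theorem Complex.ofReal_cpow_neg_sub_mul_rpow_neg_pow {a : ℝ} (ha : 0 < a) (r : ℝ) (k : ℕ)
    (s : ℂ) : (a : ℂ) ^ (-s - k) * ((a ^ (-r) : ℝ) : ℂ) ^ k
      = Complex.exp (-(Real.log a * (s + k * (1 + r)))) := by
  rw [cpow_def_of_ne_zero (ofReal_ne_zero.2 ha.ne'), ← ofReal_log ha.le,
    Real.rpow_def_of_pos ha, ofReal_exp, ← exp_nat_mul, ← exp_add]
  push_cast
  ring_nf

theorem lucas_zeta_term_constant_term_general (a b : ℝ) (ha : 1 < a)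
    (D : ℝ) (hD : D = (a - b) ^ 2)
    (p q : ℕ) (hbval : b = a ^ (-(p / q : ℝ)))
    (k ℓ : ℕ) (hℓ : (ℓ : ℝ) = k * (1 + (p : ℝ) / q))
    (Z : ℂ → ℂ)
    (hZ : ∀ s : ℂ, Z s = (D : ℂ) ^ (s / 2) * genBinomNeg s k * (-1) ^ k *
      ((a : ℂ) ^ (-s - k) * (b : ℂ) ^ k) / (1 - (a : ℂ) ^ (-s - k) * (b : ℂ) ^ k)) :
    Filter.Tendsto
      (fun s : ℂ => Z s -
        (D : ℂ) ^ (-(ℓ : ℂ) / 2) * (ℓ.choose k) * (-1) ^ k / ((Real.log a : ℂ) * (s + ℓ)))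
      (nhdsWithin (-(ℓ : ℂ)) {(-(ℓ : ℂ))}ᶜ)
      (nhds ((D : ℂ) ^ (-(ℓ : ℂ) / 2) * (ℓ.choose k) * (-1) ^ k *
        (((Real.log D - Real.log a) / (2 * Real.log a) : ℝ) +
         (((harmonic (ℓ - k) : ℝ) - (harmonic ℓ : ℝ)) / Real.log a : ℝ)))) := by
  have ha0 : 0 < a := one_pos.trans ha
  have hL : (Real.log a : ℂ) ≠ 0 := ofReal_ne_zero.2 (Real.log_pos ha).ne'
  have hpq_nonneg : 0 ≤ (p / q : ℝ) := by positivity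
  have hba : b < a :=
    hbval ▸ (Real.rpow_le_one_of_one_le_of_nonpos ha.le (neg_nonpos.2 hpq_nonneg)).trans_lt ha
  have hD0 : 0 < D := hD ▸ pow_pos (sub_pos.2 hba) 2
  have hkℓ : k ≤ ℓ := by
    exact_mod_cast hℓ ▸ le_mul_of_one_le_right k.cast_nonneg (le_add_of_nonneg_right hpq_nonneg)
  set P : ℂ → ℂ := fun s => (D : ℂ) ^ (s / 2) * genBinomNeg s k * (-1) ^ k
  have hZP : ∀ s, Z s = P s * (Complex.exp (Real.log a * (s - -ℓ)) - 1)⁻¹ := by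
    intro s
    have hℓC : (ℓ : ℂ) = k * (1 + ((p / q : ℝ) : ℂ)) := by exact_mod_cast congrArg ofReal hℓ
    rw [hZ, hbval, ofReal_cpow_neg_sub_mul_rpow_neg_pow ha0, ← hℓC, mul_div_assoc,
      exp_neg_div_one_sub_exp_neg, sub_neg_eq_add]
  have hcpow : HasDerivAt (fun s : ℂ => (D : ℂ) ^ (s / 2))
      ((D : ℂ) ^ (-(ℓ : ℂ) / 2) * Real.log D * (1 / 2)) (-ℓ) := by
    rw [ofReal_log hD0.le]
    exact ((hasDerivAt_id _).div_const 2).const_cpow (Or.inl (ofReal_ne_zero.2 hD0.ne'))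
  have hP : HasDerivAt P _ (-ℓ) :=
    (hcpow.mul (hasDerivAt_genBinomNeg_neg_natCast hkℓ)).mul_const ((-1 : ℂ) ^ k)
  have hPℓ : P (-ℓ) = (D : ℂ) ^ (-(ℓ : ℂ) / 2) * (ℓ.choose k) * (-1) ^ k := by
    simp only [P, genBinomNeg_neg_natCast]
  have hlim := hP.tendsto_mul_inv_exp_sub_one_sub_div hL
  rw [hPℓ, genBinomNeg_neg_natCast] at hlim
  convert hlim using 2 with s
  · rw [hZP, sub_neg_eq_add]
  · push_cast
    field_simp
    ring

theorem lucas_zeta_term_constant_term (a b : ℝ) (ha : 1 < a) (hb : |b| < a) (hb0 : 0 < |b|)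
    (D : ℝ) (hD : D = (a - b) ^ 2) (hQ : 0 < a * b)
    (p q : ℕ) (hp : 0 < p) (hq : 0 < q) (hpq : Nat.Coprime p q)
    (hbval : b = a ^ (-(p / q : ℝ)))
    (k₁ k ℓ : ℕ) (hk₁ : 0 < k₁) (hk : k = q * k₁)
    (hℓ : (ℓ : ℝ) = k * (1 + (p : ℝ) / q))
    (Z : ℂ → ℂ)
    (hZ : ∀ s : ℂ, Z s = (D : ℂ) ^ (s / 2) * genBinomNeg s k * (-1) ^ k *
      ((a : ℂ) ^ (-s - k) * (b : ℂ) ^ k) / (1 - (a : ℂ) ^ (-s - k) * (b : ℂ) ^ k)) :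
    Filter.Tendsto
      (fun s : ℂ => Z s -
        (D : ℂ) ^ (-(ℓ : ℂ) / 2) * (ℓ.choose k) * (-1) ^ k / ((Real.log a : ℂ) * (s + ℓ)))
      (nhdsWithin (-(ℓ : ℂ)) {(-(ℓ : ℂ))}ᶜ)
      (nhds ((D : ℂ) ^ (-(ℓ : ℂ) / 2) * (ℓ.choose k) * (-1) ^ k *
        (((Real.log D - Real.log a) / (2 * Real.log a) : ℝ) +
         (((harmonic (ℓ - k) : ℝ) - (harmonic ℓ : ℝ)) / Real.log a : ℝ)))) :=
  lucas_zeta_term_constant_term_general a b ha D hD p q hbval k ℓ hℓ Z hZ
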